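/- Let W be the real vector space of n×n Hermitian complex matrices. For traceless Hermitian a define X_a : W → W by X_a(ξ) := [[ξ, a]] = (i/2)(ξa − aξ), and for traceless Hermitian b define the (gradient-like) vector field Y_b : W → W by Y_b(ξ) := b⊙ξ − Tr(bξ)·ξ (note Tr(bξ) is real for Hermitian b, ξ). With the vector-field commutator [F, G](ξ) := DG(ξ)[F(ξ)] − DF(ξ)[G(ξ)], one has [X_a, Y_b] = Y_{[[a,b]]} for all traceless Hermitian a, b. -/

import Mathlib

open Matrix

attribute [local instance] Matrix.frobeniusNormedAddCommGroup Matrix.frobeniusNormedSpace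

/-- The Jordan product of two complex matrices: `x ⊙ y = (xy + yx)/2`. -/
noncomputable def jordanProd {n : ℕ} (x y : Matrix (Fin n) (Fin n) ℂ) :
    Matrix (Fin n) (Fin n) ℂ :=
  (1 / 2 : ℂ) • (x * y + y * x)

/-- The Lie product of two complex matrices: `[[x, y]] = (i/2)(xy − yx)`. -/
noncomputable def lieProd {n : ℕ} (x y : Matrix (Fin n) (Fin n) ℂ) :
    Matrix (Fin n) (Fin n) ℂ :=
  (Complex.I / 2) • (x * y - y * x)

/-- The Hamiltonian vector field associated with a (traceless Hermitian) matrix `a`: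
`X_a(ξ) := [[ξ, a]]`. -/
noncomputable def hamVF {n : ℕ} (a : Matrix (Fin n) (Fin n) ℂ) :
    Matrix (Fin n) (Fin n) ℂ → Matrix (Fin n) (Fin n) ℂ :=
  fun ξ => lieProd ξ a

/-- The gradient-like vector field associated with a (traceless Hermitian) matrix `b`:
`Y_b(ξ) := b ⊙ ξ − Tr(bξ)·ξ`. -/
noncomputable def gradVF {n : ℕ} (b : Matrix (Fin n) (Fin n) ℂ) :
    Matrix (Fin n) (Fin n) ℂ → Matrix (Fin n) (Fin n) ℂ :=
  fun ξ => jordanProd b ξ - (Matrix.trace (b * ξ)) • ξ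

/-!
`X_a` is linear, so `DX_a(ξ) = X_a`, while `DY_b(ξ)[η] = b ⊙ η − Tr(bξ)·η − Tr(bη)·ξ`.
In `[X_a, Y_b](ξ)` the two `Tr(bξ)` terms cancel by linearity of `X_a`, cyclicity of the
trace turns `Tr(b[[ξ, a]])` into `Tr([[a, b]]ξ)`, and what remains is the identity
`b ⊙ [[ξ, a]] − [[b ⊙ ξ, a]] = [[a, b]] ⊙ ξ` of associative algebra.
-/

theorem fderiv_sub_smul_self_apply {𝕜 𝕜' E : Type*} [NontriviallyNormedField 𝕜]
    [NontriviallyNormedField 𝕜'] [NormedAlgebra 𝕜 𝕜'] [NormedAddCommGroup E] [NormedSpace 𝕜 E]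
    [NormedSpace 𝕜' E] [IsScalarTower 𝕜 𝕜' E] (L : E →L[𝕜] E) (τ : E →L[𝕜] 𝕜') (x v : E) :
    fderiv 𝕜 (fun y => L y - τ y • y) x v = L v - τ x • v - τ v • x := by
  have h : HasFDerivAt (fun y => L y - τ y • y) _ x :=
    L.hasFDerivAt.sub (τ.hasFDerivAt.smul (hasFDerivAt_id x))
  rw [h.fderiv]
  simp [sub_sub]

section

variable {n : ℕ}

theorem fderiv_hamVF_apply (a ξ η : Matrix (Fin n) (Fin n) ℂ) :
    fderiv ℝ (hamVF a) ξ η = hamVF a η :=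
  let L : Matrix (Fin n) (Fin n) ℂ →ₗ[ℝ] Matrix (Fin n) (Fin n) ℂ :=
    (Complex.I / 2) • (LinearMap.mulRight ℝ a - LinearMap.mulLeft ℝ a)
  DFunLike.congr_fun (LinearMap.toContinuousLinearMap L).fderiv η

theorem fderiv_gradVF_apply (b ξ η : Matrix (Fin n) (Fin n) ℂ) :
    fderiv ℝ (gradVF b) ξ η = jordanProd b η - trace (b * ξ) • η - trace (b * η) • ξ :=
  let J : Matrix (Fin n) (Fin n) ℂ →ₗ[ℝ] Matrix (Fin n) (Fin n) ℂ :=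
    (1 / 2 : ℂ) • (LinearMap.mulLeft ℝ b + LinearMap.mulRight ℝ b)
  let τ : Matrix (Fin n) (Fin n) ℂ →ₗ[ℝ] ℂ :=
    (traceLinearMap (Fin n) ℝ ℂ).comp (LinearMap.mulLeft ℝ b)
  fderiv_sub_smul_self_apply (LinearMap.toContinuousLinearMap J)
    (LinearMap.toContinuousLinearMap τ) ξ η

theorem trace_mul_hamVF (a b ξ : Matrix (Fin n) (Fin n) ℂ) :
    trace (b * hamVF a ξ) = trace (lieProd a b * ξ) := by
  simp only [hamVF, lieProd, Matrix.mul_smul, Matrix.smul_mul, trace_smul, mul_sub, sub_mul,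
    trace_sub, ← mul_assoc]
  rw [trace_mul_cycle b ξ a]

end

theorem hamVF_gradVF_commutator {n : ℕ} (a b : Matrix (Fin n) (Fin n) ℂ) :
    ∀ ξ : Matrix (Fin n) (Fin n) ℂ, ξ.IsHermitian →
      fderiv ℝ (gradVF b) ξ (hamVF a ξ) - fderiv ℝ (hamVF a) ξ (gradVF b ξ) =
        gradVF (lieProd a b) ξ := by
  intro ξ _
  rw [fderiv_gradVF_apply, fderiv_hamVF_apply, trace_mul_hamVF]
  simp only [gradVF, hamVF, jordanProd, lieProd, mul_sub, sub_mul, mul_add, add_mul,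
    Matrix.mul_smul, Matrix.smul_mul, smul_sub, smul_add, smul_smul, mul_assoc]
  module
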